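/- Let P be a finite set of points in ℝ² colored by a map χ : P → C into a set of colors C. Then P contains four points with pairwise distinct colors whose rectilinear convex hull has positive area (positive two-dimensional Lebesgue measure) if and only if there exists a point c ∈ ℝ² and points p ∈ NE(c) ∩ P, q ∈ NW(c) ∩ P, r ∈ SW(c) ∩ P, s ∈ SE(c) ∩ P having pairwise distinct colors. -/

import Mathlib

open MeasureTheory

/-- The open north-east quadrant of a point `c ∈ ℝ²`. -/
def quadNE (c : ℝ × ℝ) : Set (ℝ × ℝ) := {z | c.1 < z.1 ∧ c.2 < z.2}

/-- The open north-west quadrant of a point `c ∈ ℝ²`. -/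
def quadNW (c : ℝ × ℝ) : Set (ℝ × ℝ) := {z | z.1 < c.1 ∧ c.2 < z.2}

/-- The open south-west quadrant of a point `c ∈ ℝ²`. -/
def quadSW (c : ℝ × ℝ) : Set (ℝ × ℝ) := {z | z.1 < c.1 ∧ z.2 < c.2}

/-- The open south-east quadrant of a point `c ∈ ℝ²`. -/
def quadSE (c : ℝ × ℝ) : Set (ℝ × ℝ) := {z | c.1 < z.1 ∧ z.2 < c.2}

/-- A set is an open quadrant if it is one of the four open quadrants of some apex `c`. -/
def IsOpenQuadrant (Q : Set (ℝ × ℝ)) : Prop :=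
  ∃ c : ℝ × ℝ, Q = quadNE c ∨ Q = quadNW c ∨ Q = quadSW c ∨ Q = quadSE c

/-- The rectilinear convex hull of `P`: the points `x` such that every open quadrant
containing `x` contains a point of `P`. -/
def RH (P : Set (ℝ × ℝ)) : Set (ℝ × ℝ) :=
  {x | ∀ Q : Set (ℝ × ℝ), IsOpenQuadrant Q → x ∈ Q → (Q ∩ P).Nonempty}

/-! Both sides say that some apex has all four of its open quadrants occupied.
If every open quadrant of `c` meets `S`, the same holds for all points near `c`, and all these
points lie in `RH S`, so `RH S` has positive area. Conversely, the horizontal and vertical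
lines through the finitely many points of `S` form a null set, so a hull of positive area
contains a point `x` off all of them. Near `x` no point of `S` changes quadrant, so applying
the definition of `RH S` to a quadrant with apex close to `x` yields a point of `S` in the
corresponding open quadrant of `x` itself. Points in different open quadrants of an apex are
distinct, so the four colors remain pairwise distinct. -/

open Set Filter Topology

lemma Set.injOn_four_of_ne {α β : Type*} {f : α → β} {p q r s : α}
    (h : f p ≠ f q ∧ f p ≠ f r ∧ f p ≠ f s ∧ f q ≠ f r ∧ f q ≠ f s ∧ f r ≠ f s) :
    InjOn f {p, q, r, s} := by
  obtain ⟨hpq, hpr, hps, hqr, hqs, hrs⟩ := h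
  rintro a (rfl | rfl | rfl | rfl) b (rfl | rfl | rfl | rfl) hab <;> first
    | rfl | exact absurd hab ‹_› | exact absurd hab.symm ‹_›

lemma eventually_lt_iff_of_ne {a t : ℝ} (h : a ≠ t) :
    ∀ᶠ s in 𝓝 t, (s < a ↔ t < a) ∧ (a < s ↔ a < t) := by
  rcases h.lt_or_gt with h | h
  · filter_upwards [eventually_gt_nhds h] with s hs
    exact ⟨iff_of_false hs.not_gt h.not_gt, iff_of_true hs h⟩
  · filter_upwards [eventually_lt_nhds h] with s hs
    exact ⟨iff_of_true hs h, iff_of_false hs.not_gt h.not_gt⟩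

lemma volume_setOf_fst_eq (t : ℝ) : volume {z : ℝ × ℝ | z.1 = t} = 0 := by
  rw [show {z : ℝ × ℝ | z.1 = t} = {t} ×ˢ univ by ext; simp, Measure.volume_eq_prod,
    Measure.prod_prod, Real.volume_singleton, zero_mul]

lemma volume_setOf_snd_eq (t : ℝ) : volume {z : ℝ × ℝ | z.2 = t} = 0 := by
  rw [show {z : ℝ × ℝ | z.2 = t} = univ ×ˢ {t} by ext; simp, Measure.volume_eq_prod,
    Measure.prod_prod, Real.volume_singleton, mul_zero]

lemma exists_mem_off_grid_of_volume_pos {A S : Set (ℝ × ℝ)} (hS : S.Countable)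
    (hA : 0 < volume A) : ∃ x ∈ A, ∀ a ∈ S, a.1 ≠ x.1 ∧ a.2 ≠ x.2 := by
  set G := ⋃ a ∈ S, {z : ℝ × ℝ | z.1 = a.1} ∪ {z | z.2 = a.2}
  have hG : volume G = 0 := (measure_biUnion_null_iff hS).2 fun a _ =>
    measure_union_null (volume_setOf_fst_eq a.1) (volume_setOf_snd_eq a.2)
  obtain ⟨x, hxA, hxG⟩ := nonempty_of_measure_ne_zero (measure_sdiff_null hG ▸ hA.ne')
  refine ⟨x, hxA, fun a ha => ?_⟩
  simp only [G, mem_iUnion, mem_union, mem_ofPred_eq, not_exists, not_or] at hxG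
  exact ⟨Ne.symm (hxG a ha).1, Ne.symm (hxG a ha).2⟩

def IsCrossCenter (S : Set (ℝ × ℝ)) (c : ℝ × ℝ) : Prop :=
  (quadNE c ∩ S).Nonempty ∧ (quadNW c ∩ S).Nonempty ∧ (quadSW c ∩ S).Nonempty ∧
    (quadSE c ∩ S).Nonempty

lemma ne_of_mem_quadrants {c a b e d : ℝ × ℝ} (ha : a ∈ quadNE c) (hb : b ∈ quadNW c)
    (he : e ∈ quadSW c) (hd : d ∈ quadSE c) :
    a ≠ b ∧ a ≠ e ∧ a ≠ d ∧ b ≠ e ∧ b ≠ d ∧ e ≠ d :=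
  ⟨ne_of_apply_ne Prod.fst (hb.1.trans ha.1).ne', ne_of_apply_ne Prod.fst (he.1.trans ha.1).ne',
    ne_of_apply_ne Prod.snd (hd.2.trans ha.2).ne', ne_of_apply_ne Prod.snd (he.2.trans hb.2).ne',
    ne_of_apply_ne Prod.fst (hb.1.trans hd.1).ne, ne_of_apply_ne Prod.fst (he.1.trans hd.1).ne⟩

lemma IsCrossCenter.mem_RH {S : Set (ℝ × ℝ)} {x : ℝ × ℝ} (hx : IsCrossCenter S x) :
    x ∈ RH S := by
  rintro Q ⟨c, rfl | rfl | rfl | rfl⟩ hxQ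
  · obtain ⟨a, ha, haS⟩ := hx.1
    exact ⟨a, ⟨hxQ.1.trans ha.1, hxQ.2.trans ha.2⟩, haS⟩
  · obtain ⟨a, ha, haS⟩ := hx.2.1
    exact ⟨a, ⟨ha.1.trans hxQ.1, hxQ.2.trans ha.2⟩, haS⟩
  · obtain ⟨a, ha, haS⟩ := hx.2.2.1
    exact ⟨a, ⟨ha.1.trans hxQ.1, ha.2.trans hxQ.2⟩, haS⟩
  · obtain ⟨a, ha, haS⟩ := hx.2.2.2
    exact ⟨a, ⟨hxQ.1.trans ha.1, ha.2.trans hxQ.2⟩, haS⟩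

lemma isOpen_setOf_inter_nonempty (S : Set (ℝ × ℝ)) {Q Q' : ℝ × ℝ → Set (ℝ × ℝ)}
    (hQ' : ∀ a, IsOpen (Q' a)) (hdual : ∀ a c, a ∈ Q c ↔ c ∈ Q' a) :
    IsOpen {c | (Q c ∩ S).Nonempty} := by
  have : {c | (Q c ∩ S).Nonempty} = ⋃ a ∈ S, Q' a := by
    ext c
    simp only [mem_ofPred_eq, Set.Nonempty, mem_inter_iff, hdual, mem_iUnion, exists_prop,
      and_comm]
  rw [this]
  exact isOpen_biUnion fun a _ => hQ' a

lemma isOpen_setOf_isCrossCenter (S : Set (ℝ × ℝ)) : IsOpen {c | IsCrossCenter S c} :=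
  (isOpen_setOf_inter_nonempty S (Q' := quadSW) (fun _ => isOpen_Iio.prod isOpen_Iio)
    fun _ _ => Iff.rfl).inter <|
  (isOpen_setOf_inter_nonempty S (Q' := quadSE) (fun _ => isOpen_Ioi.prod isOpen_Iio)
    fun _ _ => Iff.rfl).inter <|
  (isOpen_setOf_inter_nonempty S (Q' := quadNE) (fun _ => isOpen_Ioi.prod isOpen_Ioi)
    fun _ _ => Iff.rfl).inter
  (isOpen_setOf_inter_nonempty S (Q' := quadNW) (fun _ => isOpen_Iio.prod isOpen_Ioi)
    fun _ _ => Iff.rfl)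

lemma volume_RH_pos_of_isCrossCenter {S : Set (ℝ × ℝ)} {c : ℝ × ℝ} (hc : IsCrossCenter S c) :
    0 < volume (RH S) :=
  Measure.measure_pos_of_mem_nhds volume <|
    mem_of_superset ((isOpen_setOf_isCrossCenter S).mem_nhds hc) fun _ => IsCrossCenter.mem_RH

lemma eventually_mem_quadrant_iff {a x : ℝ × ℝ} (h₁ : a.1 ≠ x.1) (h₂ : a.2 ≠ x.2) :
    ∀ᶠ c in 𝓝 x, (a ∈ quadNE c ↔ a ∈ quadNE x) ∧ (a ∈ quadNW c ↔ a ∈ quadNW x) ∧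
      (a ∈ quadSW c ↔ a ∈ quadSW x) ∧ (a ∈ quadSE c ↔ a ∈ quadSE x) := by
  filter_upwards [(continuous_fst.tendsto x).eventually (eventually_lt_iff_of_ne h₁),
    (continuous_snd.tendsto x).eventually (eventually_lt_iff_of_ne h₂)] with c hc₁ hc₂
  simp only [quadNE, quadNW, quadSW, quadSE, mem_ofPred_eq, hc₁.1, hc₁.2, hc₂.1, hc₂.2, and_self]

lemma frequently_mem_quadrant (x : ℝ × ℝ) :
    (∃ᶠ c in 𝓝 x, x ∈ quadNE c) ∧ (∃ᶠ c in 𝓝 x, x ∈ quadNW c) ∧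
      (∃ᶠ c in 𝓝 x, x ∈ quadSW c) ∧ (∃ᶠ c in 𝓝 x, x ∈ quadSE c) := by
  refine ⟨(mem_closure_iff_frequently (s := Iio x.1 ×ˢ Iio x.2)).1 ?_,
    (mem_closure_iff_frequently (s := Ioi x.1 ×ˢ Iio x.2)).1 ?_,
    (mem_closure_iff_frequently (s := Ioi x.1 ×ˢ Ioi x.2)).1 ?_,
    (mem_closure_iff_frequently (s := Iio x.1 ×ˢ Ioi x.2)).1 ?_⟩ <;> simp [closure_prod_eq]

lemma inter_nonempty_of_mem_RH {S : Set (ℝ × ℝ)} (hS : S.Finite) {x : ℝ × ℝ} (hx : x ∈ RH S)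
    {Q : ℝ × ℝ → Set (ℝ × ℝ)} (hQ : ∀ c, IsOpenQuadrant (Q c))
    (hloc : ∀ a ∈ S, ∀ᶠ c in 𝓝 x, a ∈ Q c ↔ a ∈ Q x) (hfreq : ∃ᶠ c in 𝓝 x, x ∈ Q c) :
    (Q x ∩ S).Nonempty := by
  obtain ⟨c, hcS, hxc⟩ := ((eventually_all_finite hS).2 hloc).and_frequently hfreq |>.exists
  obtain ⟨a, ha, haS⟩ := hx (Q c) (hQ c) hxc
  exact ⟨a, (hcS a haS).1 ha, haS⟩

lemma isCrossCenter_of_mem_RH {S : Set (ℝ × ℝ)} (hS : S.Finite) {x : ℝ × ℝ} (hx : x ∈ RH S)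
    (hoff : ∀ a ∈ S, a.1 ≠ x.1 ∧ a.2 ≠ x.2) : IsCrossCenter S x := by
  have hloc a (ha : a ∈ S) := eventually_mem_quadrant_iff (hoff a ha).1 (hoff a ha).2
  obtain ⟨hNE, hNW, hSW, hSE⟩ := frequently_mem_quadrant x
  exact ⟨inter_nonempty_of_mem_RH hS hx (fun c => ⟨c, Or.inl rfl⟩)
      (fun a ha => (hloc a ha).mono fun _ h => h.1) hNE,
    inter_nonempty_of_mem_RH hS hx (fun c => ⟨c, Or.inr (Or.inl rfl)⟩)
      (fun a ha => (hloc a ha).mono fun _ h => h.2.1) hNW,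
    inter_nonempty_of_mem_RH hS hx (fun c => ⟨c, Or.inr (Or.inr (Or.inl rfl))⟩)
      (fun a ha => (hloc a ha).mono fun _ h => h.2.2.1) hSW,
    inter_nonempty_of_mem_RH hS hx (fun c => ⟨c, Or.inr (Or.inr (Or.inr rfl))⟩)
      (fun a ha => (hloc a ha).mono fun _ h => h.2.2.2) hSE⟩

theorem volume_RH_pos_iff_exists_isCrossCenter {S : Set (ℝ × ℝ)} (hS : S.Finite) :
    0 < volume (RH S) ↔ ∃ c, IsCrossCenter S c := by
  refine ⟨fun h => ?_, fun ⟨c, hc⟩ => volume_RH_pos_of_isCrossCenter hc⟩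
  obtain ⟨x, hx, hoff⟩ := exists_mem_off_grid_of_volume_pos hS.countable h
  exact ⟨x, isCrossCenter_of_mem_RH hS hx hoff⟩

theorem rainbow_positive_area_iff_four_colored_cross_general {C : Type*}
    (P : Set (ℝ × ℝ)) (χ : ℝ × ℝ → C) :
    (∃ p ∈ P, ∃ q ∈ P, ∃ r ∈ P, ∃ s ∈ P,
        χ p ≠ χ q ∧ χ p ≠ χ r ∧ χ p ≠ χ s ∧ χ q ≠ χ r ∧ χ q ≠ χ s ∧ χ r ≠ χ s ∧
        0 < volume (RH {p, q, r, s})) ↔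
      (∃ c : ℝ × ℝ, ∃ p ∈ quadNE c ∩ P, ∃ q ∈ quadNW c ∩ P, ∃ r ∈ quadSW c ∩ P,
        ∃ s ∈ quadSE c ∩ P,
        χ p ≠ χ q ∧ χ p ≠ χ r ∧ χ p ≠ χ s ∧ χ q ≠ χ r ∧ χ q ≠ χ s ∧ χ r ≠ χ s) := by
  constructor
  · rintro ⟨p, hp, q, hq, r, hr, s, hs, hpq, hpr, hps, hqr, hqs, hrs, hvol⟩
    obtain ⟨c, ⟨a, haQ, ha⟩, ⟨b, hbQ, hb⟩, ⟨e, heQ, he⟩, ⟨d, hdQ, hd⟩⟩ :=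
      (volume_RH_pos_iff_exists_isCrossCenter (toFinite _)).1 hvol
    have hsub : {p, q, r, s} ⊆ P := by simp [insert_subset_iff, *]
    have hχ : InjOn χ {p, q, r, s} := injOn_four_of_ne ⟨hpq, hpr, hps, hqr, hqs, hrs⟩
    obtain ⟨hab, hae, had, hbe, hbd, hed⟩ := ne_of_mem_quadrants haQ hbQ heQ hdQ
    exact ⟨c, a, ⟨haQ, hsub ha⟩, b, ⟨hbQ, hsub hb⟩, e, ⟨heQ, hsub he⟩, d, ⟨hdQ, hsub hd⟩,
      hχ.ne ha hb hab, hχ.ne ha he hae, hχ.ne ha hd had, hχ.ne hb he hbe, hχ.ne hb hd hbd,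
      hχ.ne he hd hed⟩
  · rintro ⟨c, p, ⟨hpQ, hp⟩, q, ⟨hqQ, hq⟩, r, ⟨hrQ, hr⟩, s, ⟨hsQ, hs⟩,
      hpq, hpr, hps, hqr, hqs, hrs⟩
    exact ⟨p, hp, q, hq, r, hr, s, hs, hpq, hpr, hps, hqr, hqs, hrs,
      volume_RH_pos_of_isCrossCenter (c := c)
        ⟨⟨p, hpQ, by simp⟩, ⟨q, hqQ, by simp⟩, ⟨r, hrQ, by simp⟩, ⟨s, hsQ, by simp⟩⟩⟩

/-- A finite colored point set `P` contains four points of pairwise distinct colors whose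
rectilinear convex hull has positive area if and only if there is a point `c` whose four
open quadrants each contain a point of `P`, the four points having pairwise distinct
colors. -/
theorem rainbow_positive_area_iff_four_colored_cross {C : Type*}
    (P : Set (ℝ × ℝ)) (hP : P.Finite) (χ : ℝ × ℝ → C) :
    (∃ p ∈ P, ∃ q ∈ P, ∃ r ∈ P, ∃ s ∈ P,
        χ p ≠ χ q ∧ χ p ≠ χ r ∧ χ p ≠ χ s ∧ χ q ≠ χ r ∧ χ q ≠ χ s ∧ χ r ≠ χ s ∧
        0 < volume (RH {p, q, r, s})) ↔
      (∃ c : ℝ × ℝ, ∃ p ∈ quadNE c ∩ P, ∃ q ∈ quadNW c ∩ P, ∃ r ∈ quadSW c ∩ P,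
        ∃ s ∈ quadSE c ∩ P,
        χ p ≠ χ q ∧ χ p ≠ χ r ∧ χ p ≠ χ s ∧ χ q ≠ χ r ∧ χ q ≠ χ s ∧ χ r ≠ χ s) :=
  rainbow_positive_area_iff_four_colored_cross_general P χ
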